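/- arXiv:2311.12374 — 3 statements merged into one kernel-verified Lean document; each statement's English description precedes it below -/
import Mathlib

section
/- Let f : ℝ² → ℝ be a twice continuously differentiable function which vanishes at infinity and whose functions f, ∂ₓf, ∂_yf, ∂ₓ∂_yf all belong to L²(ℝ²). Then for every (x,y) ∈ ℝ², f(x,y)² ≤ 2(‖∂ₓf‖_{L²} ‖∂_yf‖_{L²} + ‖f‖_{L²} ‖∂ₓ∂_yf‖_{L²}); in particular ‖f‖²_{L^∞(ℝ²)} ≤ 2(‖∂ₓf‖_{L²} ‖∂_yf‖_{L²} + ‖f‖_{L²} ‖∂ₓ∂_yf‖_{L²}). -/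
/-!
On a vertical line `f²` vanishes at both ends and has derivative `2 f f_y`, so
`f(x,y)² ≤ 2 ∫ |f f_y|(x,t) dt =: 2 Φ(x)`.
Integrating `∂ₓ(f f_y) = fₓ f_y + f fₓᵧ` over the whole plane and using Cauchy–Schwarz,
`Φ(x) ≤ Φ(s) + ‖fₓ‖₂‖f_y‖₂ + ‖f‖₂‖fₓᵧ‖₂` for every `s`; and `∫ Φ ≤ ‖f‖₂‖f_y‖₂ < ∞`
forces `inf Φ = 0` since the line has infinite length.
-/

open MeasureTheory Filter Topology
open scoped ENNReal

section OneDim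

variable {E : Type*} [NormedAddCommGroup E] [NormedSpace ℝ E] [CompleteSpace E]

theorem enorm_sub_le_lintegral_enorm_of_hasDerivAt {g g' : ℝ → E}
    (hg : ∀ t, HasDerivAt g (g' t) t) (a b : ℝ) : ‖g b - g a‖ₑ ≤ ∫⁻ t, ‖g' t‖ₑ := by
  by_cases hfin : ∫⁻ t, ‖g' t‖ₑ = ∞
  · simp [hfin]
  have hint : Integrable g' :=
    ⟨(aestronglyMeasurable_deriv g volume).congr (ae_of_all _ fun t => (hg t).deriv),
      lt_top_iff_ne_top.2 hfin⟩
  rw [← intervalIntegral.integral_eq_sub_of_hasDerivAt (fun t _ => hg t)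
    hint.intervalIntegrable, ← ofReal_norm, intervalIntegral.norm_integral_eq_norm_integral_uIoc,
    ofReal_norm]
  exact (enorm_integral_le_lintegral_enorm _).trans (setLIntegral_le_lintegral _ _)

theorem enorm_le_lintegral_enorm_of_hasDerivAt_of_tendsto_cocompact {g g' : ℝ → E}
    (hg : ∀ t, HasDerivAt g (g' t) t) (hvan : Tendsto g (cocompact ℝ) (𝓝 0)) (x : ℝ) :
    ‖g x‖ₑ ≤ ∫⁻ t, ‖g' t‖ₑ := by
  have hlim : Tendsto (fun s => ‖g x - g s‖ₑ) (cocompact ℝ) (𝓝 ‖g x - 0‖ₑ) :=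
    (tendsto_const_nhds.sub hvan).enorm
  rw [sub_zero] at hlim
  exact le_of_tendsto' hlim fun s => enorm_sub_le_lintegral_enorm_of_hasDerivAt hg s x

end OneDim

theorem sq_enorm_le_two_mul_lintegral_enorm_mul_deriv {g g' : ℝ → ℝ}
    (hg : ∀ t, HasDerivAt g (g' t) t) (hvan : Tendsto g (cocompact ℝ) (𝓝 0)) (x : ℝ) :
    ‖g x‖ₑ ^ 2 ≤ 2 * ∫⁻ t, ‖g t * g' t‖ₑ := by
  have hsq := enorm_le_lintegral_enorm_of_hasDerivAt_of_tendsto_cocompact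
    (g := fun t => g t * g t) (fun t => (hg t).mul (hg t))
    (by simpa only [mul_zero] using hvan.mul hvan) x
  have hderiv : ∀ t, g' t * g t + g t * g' t = 2 * (g t * g' t) := fun t => by ring
  have htwo : ‖(2 : ℝ)‖ₑ = 2 := by exact_mod_cast Real.enorm_natCast 2
  simp only [hderiv, enorm_mul (2 : ℝ), htwo] at hsq
  rwa [lintegral_const_mul' _ _ (by simp), enorm_mul, ← sq] at hsq

theorem eLpNorm_mul_le_mul_eLpNorm {α 𝕜 : Type*} [MeasurableSpace α] {μ : Measure α}
    [NormedRing 𝕜] {p q r : ℝ≥0∞} [p.HolderTriple q r] {a b : α → 𝕜}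
    (ha : AEStronglyMeasurable a μ) (hb : AEStronglyMeasurable b μ) :
    eLpNorm (fun z => a z * b z) r μ ≤ eLpNorm a p μ * eLpNorm b q μ := by
  simpa using eLpNorm_le_eLpNorm_mul_eLpNorm'_of_norm ha hb (· * ·) 1
    (ae_of_all _ fun z => by simpa using norm_mul_le (a z) (b z))

theorem iInf_eq_zero_of_lintegral_ne_top {α : Type*} [MeasurableSpace α] {μ : Measure α}
    (hμ : μ Set.univ = ∞) {F : α → ℝ≥0∞} (hF : ∫⁻ a, F a ∂μ ≠ ∞) : ⨅ a, F a = 0 := by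
  by_contra h
  have hle : (⨅ a, F a) * μ Set.univ ≤ ∫⁻ a, F a ∂μ := by
    rw [← lintegral_const]
    exact lintegral_mono fun a => iInf_le F a
  rw [hμ, ENNReal.mul_top h, top_le_iff] at hle
  exact hF hle

theorem lintegral_enorm_slice_le_add {β E : Type*} [MeasurableSpace β] {μ : Measure β}
    [SFinite μ] [NormedAddCommGroup E] [NormedSpace ℝ E] [CompleteSpace E] {w w' : ℝ × β → E}
    (hw : ∀ u b, HasDerivAt (fun u => w (u, b)) (w' (u, b)) u)
    (hw' : AEStronglyMeasurable w' (volume.prod μ)) (x s : ℝ) :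
    ∫⁻ b, ‖w (x, b)‖ₑ ∂μ ≤ ∫⁻ b, ‖w (s, b)‖ₑ ∂μ + ∫⁻ p, ‖w' p‖ₑ ∂(volume.prod μ) := by
  rw [lintegral_prod_symm _ hw'.enorm,
    ← lintegral_add_right' _ hw'.enorm.lintegral_prod_left']
  refine lintegral_mono fun b => ?_
  calc ‖w (x, b)‖ₑ ≤ ‖w (s, b)‖ₑ + ‖w (x, b) - w (s, b)‖ₑ := by
        simpa using enorm_add_le (w (s, b)) (w (x, b) - w (s, b))
    _ ≤ _ := by gcongr; exact enorm_sub_le_lintegral_enorm_of_hasDerivAt (hw · b) s x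

theorem sq_enorm_le_two_mul_eLpNorm_partial_deriv {f fx fy fxy : ℝ × ℝ → ℝ}
    (hx : ∀ u t, HasDerivAt (fun u => f (u, t)) (fx (u, t)) u)
    (hy : ∀ x t, HasDerivAt (fun t => f (x, t)) (fy (x, t)) t)
    (hxy : ∀ u t, HasDerivAt (fun u => fy (u, t)) (fxy (u, t)) u)
    (hvan : ∀ x, Tendsto (fun t => f (x, t)) (cocompact ℝ) (𝓝 0))
    (hf : MemLp f 2) (hfx : AEStronglyMeasurable fx) (hfy : MemLp fy 2)
    (hfxy : AEStronglyMeasurable fxy) (p : ℝ × ℝ) :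
    ‖f p‖ₑ ^ 2 ≤ 2 * (eLpNorm fx 2 volume * eLpNorm fy 2 volume
      + eLpNorm f 2 volume * eLpNorm fxy 2 volume) := by
  obtain ⟨x, y⟩ := p
  set S := eLpNorm fx 2 volume * eLpNorm fy 2 volume + eLpNorm f 2 volume * eLpNorm fxy 2 volume
  set Φ : ℝ → ℝ≥0∞ := fun s => ∫⁻ t, ‖f (s, t) * fy (s, t)‖ₑ
  have hline : ‖f (x, y)‖ₑ ^ 2 ≤ 2 * Φ x :=
    sq_enorm_le_two_mul_lintegral_enorm_mul_deriv (hy x) (hvan x) y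
  have hΦ_int : ∫⁻ s, Φ s ≤ eLpNorm f 2 volume * eLpNorm fy 2 volume := by
    calc ∫⁻ s, Φ s = eLpNorm (fun p => f p * fy p) 1 volume := by
          rw [eLpNorm_one_eq_lintegral_enorm, Measure.volume_eq_prod,
            lintegral_prod (fun p => ‖f p * fy p‖ₑ) (hf.1.mul hfy.1).enorm]
      _ ≤ _ := eLpNorm_mul_le_mul_eLpNorm hf.1 hfy.1
  have hΦ_inf : ⨅ s, Φ s = 0 := iInf_eq_zero_of_lintegral_ne_top Real.volume_univ
    (ne_top_of_le_ne_top (ENNReal.mul_ne_top hf.eLpNorm_ne_top hfy.eLpNorm_ne_top) hΦ_int)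
  have htransport : ∀ s, Φ x ≤ Φ s + eLpNorm (fun p => fx p * fy p + f p * fxy p) 1 volume := by
    intro s
    rw [eLpNorm_one_eq_lintegral_enorm, Measure.volume_eq_prod]
    exact lintegral_enorm_slice_le_add (w := fun p => f p * fy p)
      (w' := fun p => fx p * fy p + f p * fxy p) (fun u t => (hx u t).mul (hxy u t))
      ((hfx.mul hfy.1).add (hf.1.mul hfxy)) x s
  have hderiv : eLpNorm (fun p => fx p * fy p + f p * fxy p) 1 volume ≤ S :=
    (eLpNorm_add_le (hfx.mul hfy.1) (hf.1.mul hfxy) le_rfl).trans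
      (add_le_add (eLpNorm_mul_le_mul_eLpNorm hfx hfy.1) (eLpNorm_mul_le_mul_eLpNorm hf.1 hfxy))
  calc ‖f (x, y)‖ₑ ^ 2 ≤ 2 * Φ x := hline
    _ ≤ 2 * S := by
      gcongr
      calc Φ x ≤ ⨅ s, (Φ s + S) := le_iInf fun s => (htransport s).trans (by gcongr)
        _ = S := by rw [← ENNReal.iInf_add, hΦ_inf, zero_add]

theorem tendsto_prodMk_cocompact {X Y : Type*} [TopologicalSpace X] [TopologicalSpace Y]
    (x : X) :
    Tendsto (Prod.mk x) (cocompact Y) (cocompact (X × Y)) := by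
  rw [← coprod_cocompact]
  refine Tendsto.mono_right ?_ le_sup_right
  rw [tendsto_comap_iff]
  exact tendsto_id

section Slices

variable {E : Type*} [NormedAddCommGroup E] [NormedSpace ℝ E] {f : ℝ × ℝ → E} {u t : ℝ}

theorem DifferentiableAt.hasDerivAt_slice_fst (hf : DifferentiableAt ℝ f (u, t)) :
    HasDerivAt (fun u => f (u, t)) (fderiv ℝ f (u, t) (1, 0)) u :=
  hf.hasFDerivAt.comp_hasDerivAt u ((hasDerivAt_id u).prodMk (hasDerivAt_const u t))

theorem DifferentiableAt.hasDerivAt_slice_snd (hf : DifferentiableAt ℝ f (u, t)) :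
    HasDerivAt (fun t => f (u, t)) (fderiv ℝ f (u, t) (0, 1)) t :=
  hf.hasFDerivAt.comp_hasDerivAt t ((hasDerivAt_const t u).prodMk (hasDerivAt_id t))

end Slices

theorem eLpNorm_top_sq_le_ofReal_of_sq_le {α : Type*} [MeasurableSpace α] [Nonempty α]
    {μ : Measure α} {f : α → ℝ} {R : ℝ} (h : ∀ a, f a ^ 2 ≤ R) :
    eLpNorm f ⊤ μ ^ 2 ≤ ENNReal.ofReal R := by
  have hbound : eLpNorm f ⊤ μ ≤ ENNReal.ofReal √R := by
    rw [eLpNorm_exponent_top]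
    exact eLpNormEssSup_le_of_ae_bound (ae_of_all _ fun a => Real.abs_le_sqrt (h a))
  calc eLpNorm f ⊤ μ ^ 2 ≤ ENNReal.ofReal √R ^ 2 := by gcongr
    _ = ENNReal.ofReal R := by
      rw [← ENNReal.ofReal_pow (Real.sqrt_nonneg R),
        Real.sq_sqrt ((sq_nonneg _).trans (h (Classical.arbitrary α)))]

/-- a Gagliardo–Nirenberg-type `L^∞` inequality in 2D:
`‖f‖_∞² ≤ 2(‖fₓ‖₂‖f_y‖₂ + ‖f‖₂‖f_{xy}‖₂)`. -/
theorem Linfty_interpolation_2d (f fx fy fxy : ℝ × ℝ → ℝ)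
    (hf : ContDiff ℝ 2 f)
    (hvan : Filter.Tendsto f (Filter.cocompact (ℝ × ℝ)) (nhds 0))
    (hfx : ∀ p : ℝ × ℝ, fx p = fderiv ℝ f p (1, 0))
    (hfy : ∀ p : ℝ × ℝ, fy p = fderiv ℝ f p (0, 1))
    (hfxy : ∀ p : ℝ × ℝ, fxy p = fderiv ℝ (fun q => fderiv ℝ f q (0, 1)) p (1, 0))
    (h1 : MemLp f 2 (volume : Measure (ℝ × ℝ)))
    (h2 : MemLp fx 2 (volume : Measure (ℝ × ℝ)))
    (h3 : MemLp fy 2 (volume : Measure (ℝ × ℝ)))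
    (h4 : MemLp fxy 2 (volume : Measure (ℝ × ℝ))) :
    (∀ p : ℝ × ℝ, (f p) ^ 2 ≤
      2 * ((eLpNorm fx 2 (volume : Measure (ℝ × ℝ))).toReal *
              (eLpNorm fy 2 (volume : Measure (ℝ × ℝ))).toReal +
            (eLpNorm f 2 (volume : Measure (ℝ × ℝ))).toReal *
              (eLpNorm fxy 2 (volume : Measure (ℝ × ℝ))).toReal)) ∧
    (eLpNorm f ⊤ (volume : Measure (ℝ × ℝ))) ^ 2 ≤
      ENNReal.ofReal
        (2 * ((eLpNorm fx 2 (volume : Measure (ℝ × ℝ))).toReal *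
                (eLpNorm fy 2 (volume : Measure (ℝ × ℝ))).toReal +
              (eLpNorm f 2 (volume : Measure (ℝ × ℝ))).toReal *
                (eLpNorm fxy 2 (volume : Measure (ℝ × ℝ))).toReal)) := by
  have hfd : Differentiable ℝ f := hf.differentiable two_ne_zero
  have hfyd : Differentiable ℝ fy := by
    rw [funext hfy]
    exact ((hf.fderiv_right one_add_one_eq_two.le).clm_apply contDiff_const).differentiable
      one_ne_zero
  have hpointwise (p : ℝ × ℝ) := sq_enorm_le_two_mul_eLpNorm_partial_deriv
    (fun u t => hfx (u, t) ▸ (hfd _).hasDerivAt_slice_fst)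
    (fun x t => hfy (x, t) ▸ (hfd _).hasDerivAt_slice_snd)
    (fun u t => by simpa only [hfxy, ← funext hfy] using (hfyd (u, t)).hasDerivAt_slice_fst)
    (fun x => hvan.comp (tendsto_prodMk_cocompact x)) h1 h2.1 h3 h4.1 p
  have hf_fin := h1.eLpNorm_ne_top
  have hfx_fin := h2.eLpNorm_ne_top
  have hfy_fin := h3.eLpNorm_ne_top
  have hfxy_fin := h4.eLpNorm_ne_top
  have hreal : ∀ p, f p ^ 2 ≤ 2 * ((eLpNorm fx 2 volume).toReal * (eLpNorm fy 2 volume).toReal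
      + (eLpNorm f 2 volume).toReal * (eLpNorm fxy 2 volume).toReal) := fun p => by
    simpa [ENNReal.toReal_add, ENNReal.mul_eq_top, hf_fin, hfx_fin, hfy_fin, hfxy_fin] using
      ENNReal.toReal_mono (by finiteness) (hpointwise p)
  exact ⟨hreal, eLpNorm_top_sq_le_ofReal_of_sq_le hreal⟩
end

section
/- Let q ≥ 1 be an integer and let f : ℝ² → ℝ be a continuously differentiable function which vanishes at infinity and such that f, ∂ₓf, ∂_yf ∈ L²(ℝ²) and f ∈ L^{2q}(ℝ²). Then ‖f‖_{L^{2q}}^{2q} ≤ (q!)² ‖f‖_{L²}² ‖∂ₓf‖_{L²}^{q−1} ‖∂_yf‖_{L²}^{q−1}. -/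
/-!
Along every horizontal or vertical line, the fundamental theorem of calculus for `f^(r+1)`
gives `|f(x,y)|^(r+1) ≤ (r+1) ∫ |f|^r |∂f|` over that line. Multiplying the
horizontal and the vertical bound and integrating over the plane (Fubini), then applying
Cauchy–Schwarz to each factor, yields
`‖f‖_{2r+2}^{2r+2} ≤ (r+1)² ‖f‖_{2r}^{2r} ‖∂ₓf‖₂ ‖∂_yf‖₂`; iterating from `r = 1` produces `(q!)²`.
-/

open MeasureTheory Filter Set
open scoped ENNReal Topology

theorem enorm_pow_succ_le_lintegral_deriv {g : ℝ → ℝ} (hg : Differentiable ℝ g)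
    (hg0 : Tendsto g atBot (𝓝 0)) (q : ℕ) (x : ℝ) :
    ‖g x‖ₑ ^ (q + 1) ≤ (q + 1) * ∫⁻ t, ‖g t‖ₑ ^ q * ‖deriv g t‖ₑ := by
  set φ : ℝ → ℝ := fun t => (q + 1) * g t ^ q * deriv g t
  have hφ : ∀ t, ‖φ t‖ₑ = (q + 1) * (‖g t‖ₑ ^ q * ‖deriv g t‖ₑ) := fun t => by
    simp only [φ, enorm_mul, enorm_pow, mul_assoc]
    congr
    exact_mod_cast Real.enorm_natCast (q + 1)
  by_cases hI : ∫⁻ t, ‖g t‖ₑ ^ q * ‖deriv g t‖ₑ = ∞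
  · simp [hI]
  have hφint : Integrable φ := by
    refine ⟨(((hg.continuous.pow q).const_smul ((q : ℝ) + 1)).measurable.mul
      (measurable_deriv g)).aestronglyMeasurable, ?_⟩
    rw [HasFiniteIntegral, lintegral_congr hφ, lintegral_const_mul' _ _ (by simp)]
    exact ENNReal.mul_lt_top (by simp) (lt_top_iff_ne_top.2 hI)
  have hFTC : ∫ t in Iic x, φ t = g x ^ (q + 1) := by
    rw [← sub_zero (g x ^ (q + 1))]
    exact integral_Iic_of_hasDerivAt_of_tendsto' (f := fun t => g t ^ (q + 1))
      (fun t _ => by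
        simpa [φ, mul_comm, mul_assoc, Pi.pow_def] using (hg t).hasDerivAt.pow (q + 1))
      hφint.integrableOn (by simpa using hg0.pow (q + 1))
  calc ‖g x‖ₑ ^ (q + 1) = ‖∫ t in Iic x, φ t‖ₑ := by rw [hFTC, enorm_pow]
    _ ≤ ∫⁻ t in Iic x, ‖φ t‖ₑ := enorm_integral_le_lintegral_enorm _
    _ ≤ ∫⁻ t, ‖φ t‖ₑ := setLIntegral_le_lintegral _ _
    _ = (q + 1) * ∫⁻ t, ‖g t‖ₑ ^ q * ‖deriv g t‖ₑ := by
      rw [lintegral_congr hφ, lintegral_const_mul' _ _ (by simp)]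

theorem enorm_pow_succ_le_lintegral_fderiv_comp {E : Type*} [NormedAddCommGroup E]
    [NormedSpace ℝ E] {f : E → ℝ} (hf : Differentiable ℝ f)
    (hf0 : Tendsto f (cocompact E) (𝓝 0)) {γ : ℝ → E} {v : E} (hγ : ∀ t, HasDerivAt γ v t)
    (hγ_atBot : Tendsto γ atBot (cocompact E)) (q : ℕ) (x : ℝ) :
    ‖f (γ x)‖ₑ ^ (q + 1) ≤ (q + 1) * ∫⁻ t, ‖f (γ t)‖ₑ ^ q * ‖fderiv ℝ f (γ t) v‖ₑ := by
  have hd : ∀ t, HasDerivAt (f ∘ γ) (fderiv ℝ f (γ t) v) t :=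
    fun t => (hf (γ t)).hasFDerivAt.comp_hasDerivAt t (hγ t)
  simpa only [fun t => (hd t).deriv, Function.comp_apply] using
    enorm_pow_succ_le_lintegral_deriv (fun t => (hd t).differentiableAt) (hf0.comp hγ_atBot) q x

theorem tendsto_prodMk_left_cocompact {X Y : Type*} [TopologicalSpace X] [TopologicalSpace Y]
    (x : X) : Tendsto (Prod.mk x : Y → X × Y) (cocompact Y) (cocompact (X × Y)) := by
  rw [← coprod_cocompact]
  refine Tendsto.mono_right ?_ le_sup_right
  rw [tendsto_comap_iff]
  exact tendsto_id

theorem tendsto_prodMk_right_cocompact {X Y : Type*} [TopologicalSpace X] [TopologicalSpace Y]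
    (y : Y) : Tendsto (fun x : X => (x, y)) (cocompact X) (cocompact (X × Y)) := by
  rw [← coprod_cocompact]
  refine Tendsto.mono_right ?_ le_sup_left
  rw [tendsto_comap_iff]
  exact tendsto_id

theorem lintegral_sq_le_mul_of_le_fst_of_le_snd {α β : Type*} [MeasurableSpace α]
    [MeasurableSpace β] {μ : Measure α} {ν : Measure β} [SFinite ν] {u : α × β → ℝ≥0∞}
    {F : α → ℝ≥0∞} {G : β → ℝ≥0∞} (hF : AEMeasurable F μ) (hG : AEMeasurable G ν)
    (huF : ∀ p, u p ≤ F p.1) (huG : ∀ p, u p ≤ G p.2) :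
    ∫⁻ p, u p ^ 2 ∂μ.prod ν ≤ (∫⁻ a, F a ∂μ) * ∫⁻ b, G b ∂ν := by
  rw [← lintegral_prod_mul hF hG]
  exact lintegral_mono fun p => (sq (u p)).trans_le (mul_le_mul' (huF p) (huG p))

theorem lintegral_enorm_pow_mul_enorm_le {α E F : Type*} [MeasurableSpace α] {μ : Measure α}
    [NormedAddCommGroup E] [NormedAddCommGroup F] {f : α → E} {g : α → F}
    (hf : AEStronglyMeasurable f μ) (hg : AEStronglyMeasurable g μ) (r : ℕ) :
    ∫⁻ a, ‖f a‖ₑ ^ r * ‖g a‖ₑ ∂μ ≤ (∫⁻ a, ‖f a‖ₑ ^ (2 * r) ∂μ) ^ (1 / 2 : ℝ) * eLpNorm g 2 μ := by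
  have h := ENNReal.lintegral_mul_le_Lp_mul_Lq μ Real.HolderConjugate.two_two
    (hf.enorm.pow_const r) hg.enorm
  rw [eLpNorm_eq_lintegral_rpow_enorm_toReal two_ne_zero ENNReal.ofNat_ne_top]
  have hpow : ∀ a, (‖f a‖ₑ ^ r) ^ (2 : ℝ) = ‖f a‖ₑ ^ (2 * r) := fun a => by
    rw [← ENNReal.rpow_natCast, ← ENNReal.rpow_mul, ← ENNReal.rpow_natCast]
    norm_num [mul_comm]
  simpa only [Pi.mul_apply, hpow, ENNReal.toReal_ofNat] using h

theorem lintegral_enorm_pow_two_mul_succ_le {f : ℝ × ℝ → ℝ} (hf : Differentiable ℝ f)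
    (hf0 : Tendsto f (cocompact (ℝ × ℝ)) (𝓝 0)) (r : ℕ) :
    ∫⁻ p, ‖f p‖ₑ ^ (2 * (r + 1)) ≤ (r + 1) ^ 2 * (∫⁻ p, ‖f p‖ₑ ^ (2 * r)) *
      eLpNorm (fun p => fderiv ℝ f p (1, 0)) 2 * eLpNorm (fun p => fderiv ℝ f p (0, 1)) 2 := by
  set I := ∫⁻ p, ‖f p‖ₑ ^ (2 * r)
  set Sx := eLpNorm (fun p => fderiv ℝ f p (1, 0)) 2
  set Sy := eLpNorm (fun p => fderiv ℝ f p (0, 1)) 2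
  set Hx : ℝ × ℝ → ℝ≥0∞ := fun p => ‖f p‖ₑ ^ r * ‖fderiv ℝ f p (1, 0)‖ₑ
  set Hy : ℝ × ℝ → ℝ≥0∞ := fun p => ‖f p‖ₑ ^ r * ‖fderiv ℝ f p (0, 1)‖ₑ
  have hf_meas : Measurable f := hf.continuous.measurable
  have hHx : Measurable Hx :=
    (hf_meas.enorm.pow_const r).mul (measurable_fderiv_apply_const ℝ f _).enorm
  have hHy : Measurable Hy :=
    (hf_meas.enorm.pow_const r).mul (measurable_fderiv_apply_const ℝ f _).enorm
  have h_vert : ∀ p : ℝ × ℝ, ‖f p‖ₑ ^ (r + 1) ≤ (r + 1) * ∫⁻ s, Hy (p.1, s) := fun ⟨x, y⟩ =>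
    enorm_pow_succ_le_lintegral_fderiv_comp hf hf0
      (fun s => (hasDerivAt_const s x).prodMk (hasDerivAt_id s))
      ((tendsto_prodMk_left_cocompact x).mono_left atBot_le_cocompact) r y
  have h_horiz : ∀ p : ℝ × ℝ, ‖f p‖ₑ ^ (r + 1) ≤ (r + 1) * ∫⁻ t, Hx (t, p.2) := fun ⟨x, y⟩ =>
    enorm_pow_succ_le_lintegral_fderiv_comp hf hf0
      (fun t => (hasDerivAt_id t).prodMk (hasDerivAt_const t y))
      ((tendsto_prodMk_right_cocompact y).mono_left atBot_le_cocompact) r x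
  have hr : (r + 1 : ℝ≥0∞) ≠ ∞ := by simp
  calc ∫⁻ p, ‖f p‖ₑ ^ (2 * (r + 1)) = ∫⁻ p, (‖f p‖ₑ ^ (r + 1)) ^ 2 := by simp only [pow_mul']
    _ ≤ (∫⁻ x, (r + 1) * ∫⁻ s, Hy (x, s)) * ∫⁻ y, (r + 1) * ∫⁻ t, Hx (t, y) := by
      rw [Measure.volume_eq_prod]
      exact lintegral_sq_le_mul_of_le_fst_of_le_snd
        (hHy.lintegral_prod_right'.const_mul _).aemeasurable
        (hHx.lintegral_prod_left'.const_mul _).aemeasurable h_vert h_horiz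
    _ = ((r + 1) * ∫⁻ p, Hy p) * ((r + 1) * ∫⁻ p, Hx p) := by
      rw [lintegral_const_mul' _ _ hr, lintegral_const_mul' _ _ hr, Measure.volume_eq_prod,
        lintegral_prod _ hHy.aemeasurable, lintegral_prod_symm _ hHx.aemeasurable]
    _ ≤ ((r + 1) * (I ^ (1 / 2 : ℝ) * Sy)) * ((r + 1) * (I ^ (1 / 2 : ℝ) * Sx)) := by
      gcongr <;> exact lintegral_enorm_pow_mul_enorm_le hf_meas.aestronglyMeasurable
        (measurable_fderiv_apply_const ℝ f _).aestronglyMeasurable r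
    _ = (r + 1) ^ 2 * (I ^ (1 / 2 : ℝ) * I ^ (1 / 2 : ℝ)) * Sx * Sy := by ring
    _ = (r + 1) ^ 2 * I * Sx * Sy := by
      rw [← ENNReal.rpow_add_of_nonneg _ _ (by norm_num) (by norm_num)]
      norm_num

theorem eLpNorm_natCast_pow_eq_lintegral {α E : Type*} [MeasurableSpace α] {μ : Measure α}
    [NormedAddCommGroup E] {f : α → E} {n : ℕ} (hn : n ≠ 0) :
    eLpNorm f n μ ^ n = ∫⁻ a, ‖f a‖ₑ ^ n ∂μ := by
  simpa only [NNReal.coe_natCast, ENNReal.rpow_natCast, ENNReal.coe_natCast] using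
    eLpNorm_nnreal_pow_eq_lintegral (f := f) (μ := μ) (p := n) (by exact_mod_cast hn)

theorem eLpNorm_pow_le_factorial_sq_mul {f : ℝ × ℝ → ℝ} (hf : Differentiable ℝ f)
    (hf0 : Tendsto f (cocompact (ℝ × ℝ)) (𝓝 0)) {q : ℕ} (hq : 1 ≤ q) :
    eLpNorm f (2 * q : ℕ) ^ (2 * q) ≤ (q.factorial : ℝ≥0∞) ^ 2 * eLpNorm f 2 ^ 2 *
      eLpNorm (fun p => fderiv ℝ f p (1, 0)) 2 ^ (q - 1) *
      eLpNorm (fun p => fderiv ℝ f p (0, 1)) 2 ^ (q - 1) := by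
  set Sx := eLpNorm (fun p => fderiv ℝ f p (1, 0)) 2
  set Sy := eLpNorm (fun p => fderiv ℝ f p (0, 1)) 2
  have h2 : eLpNorm f 2 ^ 2 = ∫⁻ p, ‖f p‖ₑ ^ 2 := by
    simpa using eLpNorm_natCast_pow_eq_lintegral (f := f) (μ := volume) two_ne_zero
  rw [eLpNorm_natCast_pow_eq_lintegral (by omega), h2]
  induction q, hq using Nat.le_induction with
  | base => simp
  | succ n hn ih =>
    calc ∫⁻ p, ‖f p‖ₑ ^ (2 * (n + 1))
        ≤ (n + 1) ^ 2 * (∫⁻ p, ‖f p‖ₑ ^ (2 * n)) * Sx * Sy :=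
          lintegral_enorm_pow_two_mul_succ_le hf hf0 n
      _ ≤ (n + 1) ^ 2 * ((n.factorial : ℝ≥0∞) ^ 2 * (∫⁻ p, ‖f p‖ₑ ^ 2) * Sx ^ (n - 1) *
          Sy ^ (n - 1)) * Sx * Sy := by gcongr
      _ = ((n + 1).factorial : ℝ≥0∞) ^ 2 * (∫⁻ p, ‖f p‖ₑ ^ 2) * Sx ^ (n + 1 - 1) *
          Sy ^ (n + 1 - 1) := by
        have hn0 : n ≠ 0 := by omega
        rw [Nat.factorial_succ, Nat.add_sub_cancel, ← pow_sub_one_mul hn0 Sx,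
          ← pow_sub_one_mul hn0 Sy]
        push_cast
        ring

theorem L2q_interpolation_2d_general (q : ℕ) (hq : 1 ≤ q) (f fx fy : ℝ × ℝ → ℝ)
    (hf : ContDiff ℝ 1 f)
    (hvan : Filter.Tendsto f (Filter.cocompact (ℝ × ℝ)) (nhds 0))
    (hfx : ∀ p : ℝ × ℝ, fx p = fderiv ℝ f p (1, 0))
    (hfy : ∀ p : ℝ × ℝ, fy p = fderiv ℝ f p (0, 1))
    (h1 : MemLp f 2 (volume : Measure (ℝ × ℝ)))
    (h2 : MemLp fx 2 (volume : Measure (ℝ × ℝ)))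
    (h3 : MemLp fy 2 (volume : Measure (ℝ × ℝ))) :
    (eLpNorm f ((2 * q : ℕ) : ℝ≥0∞) (volume : Measure (ℝ × ℝ))).toReal ^ (2 * q)
      ≤ (q.factorial : ℝ) ^ 2 *
          (eLpNorm f 2 (volume : Measure (ℝ × ℝ))).toReal ^ 2 *
          (eLpNorm fx 2 (volume : Measure (ℝ × ℝ))).toReal ^ (q - 1) *
          (eLpNorm fy 2 (volume : Measure (ℝ × ℝ))).toReal ^ (q - 1) := by
  obtain rfl : fx = _ := funext hfx
  obtain rfl : fy = _ := funext hfy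
  have h_fin : (q.factorial : ℝ≥0∞) ^ 2 * eLpNorm f 2 ^ 2 *
      eLpNorm (fun p => fderiv ℝ f p (1, 0)) 2 ^ (q - 1) *
      eLpNorm (fun p => fderiv ℝ f p (0, 1)) 2 ^ (q - 1) ≠ ∞ := by
    have := h1.eLpNorm_ne_top
    have := h2.eLpNorm_ne_top
    have := h3.eLpNorm_ne_top
    finiteness
  simpa only [ENNReal.toReal_mul, ENNReal.toReal_pow, ENNReal.toReal_natCast] using
    ENNReal.toReal_mono h_fin (eLpNorm_pow_le_factorial_sq_mul (hf.differentiable one_ne_zero) hvan hq)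

/-- Ladyzhenskaya-type inequality:
`‖f‖_{L^{2q}}^{2q} ≤ (q!)² ‖f‖₂² ‖fₓ‖₂^{q-1} ‖f_y‖₂^{q-1}`. -/
theorem L2q_interpolation_2d (q : ℕ) (hq : 1 ≤ q) (f fx fy : ℝ × ℝ → ℝ)
    (hf : ContDiff ℝ 1 f)
    (hvan : Filter.Tendsto f (Filter.cocompact (ℝ × ℝ)) (nhds 0))
    (hfx : ∀ p : ℝ × ℝ, fx p = fderiv ℝ f p (1, 0))
    (hfy : ∀ p : ℝ × ℝ, fy p = fderiv ℝ f p (0, 1))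
    (h1 : MemLp f 2 (volume : Measure (ℝ × ℝ)))
    (h2 : MemLp fx 2 (volume : Measure (ℝ × ℝ)))
    (h3 : MemLp fy 2 (volume : Measure (ℝ × ℝ)))
    (h4 : MemLp f ((2 * q : ℕ) : ℝ≥0∞) (volume : Measure (ℝ × ℝ))) :
    (eLpNorm f ((2 * q : ℕ) : ℝ≥0∞) (volume : Measure (ℝ × ℝ))).toReal ^ (2 * q)
      ≤ (q.factorial : ℝ) ^ 2 *
          (eLpNorm f 2 (volume : Measure (ℝ × ℝ))).toReal ^ 2 *
          (eLpNorm fx 2 (volume : Measure (ℝ × ℝ))).toReal ^ (q - 1) *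
          (eLpNorm fy 2 (volume : Measure (ℝ × ℝ))).toReal ^ (q - 1) :=
  L2q_interpolation_2d_general q hq f fx fy hf hvan hfx hfy h1 h2 h3
end

section
/- Fix μ > 0. For every nonnegative integer l, every t > 0 and every (x,y) ∈ ℝ², the kernel U_l satisfies |U_l(x,y,t)| ≤ (Γ((1+2l)/4) / (4π^{3/2} μ^{(1+2l)/4})) t^{−3/4 − l/2}; in particular ‖∂ₓˡU(·,·,t)‖_{L^∞(ℝ²)} ≤ C t^{−3/4 − l/2} with C = Γ((1+2l)/4)/(4π^{3/2}μ^{(1+2l)/4}). -/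
open MeasureTheory Filter Complex

noncomputable section

/-- The kernel `U_l = ∂ₓˡ U`, where `U` is the fundamental solution of the linearized
equation `u_t + u_{xxx} + u_{yyx} - μ u_{xx} = 0`:
`U_l(x,y,t) = (t^{-1/2}/(4π^{3/2})) ∫ (iξ)^l |ξ|^{-1/2} e^{-μtξ²}
  exp(i(tξ³ - y²/(4tξ) + (π/4) sgn ξ + xξ)) dξ`. -/
def kernelU (μ : ℝ) (l : ℕ) (x y t : ℝ) : ℂ :=
  ((t ^ (-(1:ℝ)/2) / (4 * Real.pi ^ ((3:ℝ)/2)) : ℝ) : ℂ) *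
    ∫ ξ : ℝ, (Complex.I * (ξ : ℂ)) ^ l *
      ((|ξ| ^ (-(1:ℝ)/2) * Real.exp (-(μ * t) * ξ ^ 2) : ℝ) : ℂ) *
      Complex.exp (Complex.I *
        ((t * ξ ^ 3 - y ^ 2 / (4 * t * ξ) + (Real.pi / 4) * Real.sign ξ + x * ξ : ℝ) : ℂ))

/-- The kernel `V_l = ∂ₓˡ V`, where `V` is the fundamental solution of
`v_t + v_{yyx} - μ v_{xx} = 0`:
`V_l(x,y,t) = (t^{-1/2}/(4π^{3/2})) ∫ (iξ)^l |ξ|^{-1/2} e^{-μtξ²}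
  exp(i(- y²/(4tξ) + (π/4) sgn ξ + xξ)) dξ`. -/
def kernelV (μ : ℝ) (l : ℕ) (x y t : ℝ) : ℂ :=
  ((t ^ (-(1:ℝ)/2) / (4 * Real.pi ^ ((3:ℝ)/2)) : ℝ) : ℂ) *
    ∫ ξ : ℝ, (Complex.I * (ξ : ℂ)) ^ l *
      ((|ξ| ^ (-(1:ℝ)/2) * Real.exp (-(μ * t) * ξ ^ 2) : ℝ) : ℂ) *
      Complex.exp (Complex.I *
        ((- y ^ 2 / (4 * t * ξ) + (Real.pi / 4) * Real.sign ξ + x * ξ : ℝ) : ℂ))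

end

/-!
The phase of the integrand defining `U_l` is real, so the oscillatory factor has modulus one
and `|U_l(x,y,t)|` is at most `t^{-1/2}/(4π^{3/2}) ∫ |ξ|^{l-1/2} e^{-μtξ²} dξ`, whatever
`(x, y)` is. Substituting `u = μtξ²` turns this Gaussian moment into
`(μt)^{-(1+2l)/4} Γ((1+2l)/4)`, which gives the pointwise bound and hence the `L^∞` bound.
-/

open Real

theorem integral_abs_rpow_mul_exp_neg_mul_sq {q b : ℝ} (hq : -1 < q) (hb : 0 < b) :
    ∫ ξ : ℝ, |ξ| ^ q * rexp (-b * ξ ^ 2) =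
      b ^ (-(q + 1) / 2) * Real.Gamma ((q + 1) / 2) := by
  have h_even : ∫ ξ : ℝ, |ξ| ^ q * rexp (-b * ξ ^ 2)
      = 2 * ∫ ξ in Set.Ioi (0 : ℝ), ξ ^ q * rexp (-b * ξ ^ (2 : ℝ)) := by
    simp_rw [rpow_two, ← integral_comp_abs (f := fun ξ : ℝ => ξ ^ q * rexp (-b * ξ ^ 2)),
      sq_abs]
  rw [h_even, integral_rpow_mul_exp_neg_mul_rpow two_pos hq hb]
  ring

theorem norm_kernelU_integrand (l : ℕ) {ξ c : ℝ} (hξ : ξ ≠ 0) (hc : 0 ≤ c) (φ : ℝ) :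
    ‖(Complex.I * (ξ : ℂ)) ^ l * ((|ξ| ^ (-(1 : ℝ) / 2) * c : ℝ) : ℂ) *
        Complex.exp (Complex.I * (φ : ℂ))‖ = |ξ| ^ ((l : ℝ) - 1 / 2) * c := by
  rw [norm_mul, norm_mul, norm_pow, norm_mul, Complex.norm_I, one_mul, Complex.norm_real,
    Complex.norm_real, Complex.norm_exp_I_mul_ofReal, mul_one, Real.norm_eq_abs,
    Real.norm_eq_abs, abs_of_nonneg (by positivity : 0 ≤ |ξ| ^ (-(1 : ℝ) / 2) * c),
    ← rpow_natCast, ← mul_assoc, ← rpow_add (abs_pos.mpr hξ)]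
  ring_nf

theorem norm_kernelU_le {μ t : ℝ} (hμ : 0 < μ) (ht : 0 < t) (l : ℕ) (x y : ℝ) :
    ‖kernelU μ l x y t‖ ≤
      Real.Gamma ((1 + 2 * (l : ℝ)) / 4) /
          (4 * π ^ ((3 : ℝ) / 2) * μ ^ ((1 + 2 * (l : ℝ)) / 4)) *
        t ^ (-(3 : ℝ) / 4 - (l : ℝ) / 2) := by
  set s : ℝ := (1 + 2 * (l : ℝ)) / 4
  have hs : ((l : ℝ) - 1 / 2 + 1) / 2 = s := by ring
  have hq : (-1 : ℝ) < (l : ℝ) - 1 / 2 := by linarith [(Nat.cast_nonneg l : (0 : ℝ) ≤ l)]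
  have hprefactor : 0 < t ^ (-(1 : ℝ) / 2) / (4 * π ^ ((3 : ℝ) / 2)) := by positivity
  have h_integral : ‖∫ ξ : ℝ, (Complex.I * (ξ : ℂ)) ^ l *
        ((|ξ| ^ (-(1 : ℝ) / 2) * rexp (-(μ * t) * ξ ^ 2) : ℝ) : ℂ) *
        Complex.exp (Complex.I *
          ((t * ξ ^ 3 - y ^ 2 / (4 * t * ξ) + (π / 4) * Real.sign ξ + x * ξ : ℝ) : ℂ))‖
      ≤ (μ * t) ^ (-s) * Real.Gamma s := by
    refine (norm_integral_le_integral_norm _).trans_eq ?_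
    rw [← hs, ← neg_div, ← integral_abs_rpow_mul_exp_neg_mul_sq hq (mul_pos hμ ht)]
    refine integral_congr_ae ?_
    filter_upwards [Measure.ae_ne volume (0 : ℝ)] with ξ hξ
    exact norm_kernelU_integrand l hξ (exp_pos _).le _
  rw [kernelU, norm_mul, Complex.norm_real, Real.norm_eq_abs, abs_of_pos hprefactor]
  calc _ ≤ t ^ (-(1 : ℝ) / 2) / (4 * π ^ ((3 : ℝ) / 2)) * ((μ * t) ^ (-s) * Real.Gamma s) :=
        mul_le_mul_of_nonneg_left h_integral hprefactor.le
    _ = _ := by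
      rw [mul_rpow hμ.le ht.le, rpow_neg hμ.le,
        show -(3 : ℝ) / 4 - (l : ℝ) / 2 = -(1 : ℝ) / 2 + -s by ring, rpow_add ht]
      field_simp

/-- pointwise and `L^∞` decay estimate for the kernel `U_l = ∂ₓˡU`. -/
theorem kernelU_decay (μ : ℝ) (hμ : 0 < μ) (l : ℕ) (t : ℝ) (ht : 0 < t) :
    (∀ x y : ℝ, ‖kernelU μ l x y t‖ ≤
      Real.Gamma ((1 + 2 * (l : ℝ)) / 4) /
          (4 * Real.pi ^ ((3 : ℝ)/2) * μ ^ ((1 + 2 * (l : ℝ)) / 4)) *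
        t ^ (-(3 : ℝ)/4 - (l : ℝ)/2)) ∧
    eLpNorm (fun q : ℝ × ℝ => kernelU μ l q.1 q.2 t) ⊤ (volume : Measure (ℝ × ℝ))
      ≤ ENNReal.ofReal
        (Real.Gamma ((1 + 2 * (l : ℝ)) / 4) /
            (4 * Real.pi ^ ((3 : ℝ)/2) * μ ^ ((1 + 2 * (l : ℝ)) / 4)) *
          t ^ (-(3 : ℝ)/4 - (l : ℝ)/2)) := by
  refine ⟨norm_kernelU_le hμ ht l, ?_⟩
  rw [eLpNorm_exponent_top]
  exact eLpNormEssSup_le_of_ae_bound (.of_forall fun q => norm_kernelU_le hμ ht l q.1 q.2)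
end
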